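/- S(A, b) is nonempty if and only if there exist e̲ ∈ E̲, e' ∈ E' and e'' ∈ E'' such that max{X̲₁, X̲₂, X̲₃(e̲)} ≤ min{X̄₁, X̄₂(e'), X̄₃(e'')} componentwise. -/
import Mathlib


open Finset

variable {n : ℕ}

/-- max_{j} min{A i j, x i, x j} -/
noncomputable def maxmin (hn : 0 < n) (A : Fin n → Fin n → ℝ) (x : Fin n → ℝ) (i : Fin n) : ℝ :=
  Finset.univ.sup' (Finset.univ_nonempty_iff.mpr (Fin.pos_iff_nonempty.mp hn))
    (fun j => min (A i j) (min (x i) (x j)))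

def inBox (x : Fin n → ℝ) : Prop := ∀ j, x j ∈ Set.Icc (0:ℝ) 1

/-- S(aᵢ, bᵢ) -/
noncomputable def SeqSet (hn : 0 < n) (A : Fin n → Fin n → ℝ) (b : Fin n → ℝ) (i : Fin n) :
    Set (Fin n → ℝ) :=
  {x | inBox x ∧ maxmin hn A x i = b i}

/-- S(A, b) -/
noncomputable def SallSet (hn : 0 < n) (A : Fin n → Fin n → ℝ) (b : Fin n → ℝ) :
    Set (Fin n → ℝ) :=
  {x | inBox x ∧ ∀ i, maxmin hn A x i = b i}

/-- X̄(i) = X̄(i,1) -/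
noncomputable def Xbar1 (b : Fin n → ℝ) (i : Fin n) : Fin n → ℝ :=
  fun j => if j = i then b i else 1

/-- X̲(i) -/
noncomputable def Xund0 (b : Fin n → ℝ) (i : Fin n) : Fin n → ℝ :=
  fun j => if j = i then b i else 0

/-- X̄(i,2) -/
noncomputable def Xbar2 (A : Fin n → Fin n → ℝ) (b : Fin n → ℝ) (i : Fin n) : Fin n → ℝ :=
  fun j => if A i j > b i then b i else 1

/-- X̲(i,j) -/
noncomputable def XundJ (b : Fin n → ℝ) (i j : Fin n) : Fin n → ℝ :=
  fun k => if k = i ∨ k = j then b i else 0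

noncomputable def I1set (A : Fin n → Fin n → ℝ) (b : Fin n → ℝ) : Finset (Fin n) :=
  Finset.univ.filter (fun i => A i i > b i)

noncomputable def I2set (A : Fin n → Fin n → ℝ) (b : Fin n → ℝ) : Finset (Fin n) :=
  Finset.univ.filter (fun i => A i i = b i)

noncomputable def I3set (A : Fin n → Fin n → ℝ) (b : Fin n → ℝ) : Finset (Fin n) :=
  Finset.univ.filter (fun i => A i i < b i)

/-- componentwise max over an index set, zero vector when empty -/
noncomputable def vsup (s : Finset (Fin n)) (f : Fin n → Fin n → ℝ) : Fin n → ℝ :=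
  fun j => if h : s.Nonempty then s.sup' h (fun i => f i j) else 0

/-- componentwise min over an index set, all-ones vector when empty -/
noncomputable def vinf (s : Finset (Fin n)) (f : Fin n → Fin n → ℝ) : Fin n → ℝ :=
  fun j => if h : s.Nonempty then s.inf' h (fun i => f i j) else 1

noncomputable def X1lo (A : Fin n → Fin n → ℝ) (b : Fin n → ℝ) : Fin n → ℝ :=
  vsup (I1set A b) (Xund0 b)

noncomputable def X1hi (A : Fin n → Fin n → ℝ) (b : Fin n → ℝ) : Fin n → ℝ :=
  vinf (I1set A b) (Xbar1 b)

noncomputable def X2lo (A : Fin n → Fin n → ℝ) (b : Fin n → ℝ) : Fin n → ℝ :=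
  vsup (I2set A b) (Xund0 b)

/-- X̄(i,t) for t ∈ {1,2} -/
noncomputable def Xsel (A : Fin n → Fin n → ℝ) (b : Fin n → ℝ) (t : ℕ) (i : Fin n) : Fin n → ℝ :=
  if t = 1 then Xbar1 b i else Xbar2 A b i

noncomputable def X2hi (A : Fin n → Fin n → ℝ) (b : Fin n → ℝ) (e' : Fin n → ℕ) : Fin n → ℝ :=
  vinf (I2set A b) (fun i => Xsel A b (e' i) i)

noncomputable def X3lo (A : Fin n → Fin n → ℝ) (b : Fin n → ℝ) (el : Fin n → Fin n) : Fin n → ℝ :=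
  vsup (I3set A b) (fun i => XundJ b i (el i))

noncomputable def X3hi (A : Fin n → Fin n → ℝ) (b : Fin n → ℝ) (e'' : Fin n → ℕ) : Fin n → ℝ :=
  vinf (I3set A b) (fun i => Xsel A b (e'' i) i)

/-- membership of e̲ in E̲ : e̲(i) ∈ J_i for all i ∈ I₃ -/
def memEund (A : Fin n → Fin n → ℝ) (b : Fin n → ℝ) (el : Fin n → Fin n) : Prop :=
  ∀ i, A i i < b i → b i ≤ A i (el i)

/-- membership of e' in E' -/
def memE' (A : Fin n → Fin n → ℝ) (b : Fin n → ℝ) (e' : Fin n → ℕ) : Prop :=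
  ∀ i, A i i = b i → e' i = 1 ∨ e' i = 2

/-- membership of e'' in E'' -/
def memE'' (A : Fin n → Fin n → ℝ) (b : Fin n → ℝ) (e'' : Fin n → ℕ) : Prop :=
  ∀ i, A i i < b i → e'' i = 1 ∨ e'' i = 2

noncomputable def lowVec (A : Fin n → Fin n → ℝ) (b : Fin n → ℝ) (el : Fin n → Fin n) :
    Fin n → ℝ :=
  fun j => max (X1lo A b j) (max (X2lo A b j) (X3lo A b el j))

noncomputable def hiVec (A : Fin n → Fin n → ℝ) (b : Fin n → ℝ) (e' e'' : Fin n → ℕ) :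
    Fin n → ℝ :=
  fun j => min (X1hi A b j) (min (X2hi A b e' j) (X3hi A b e'' j))

/-- admissibility of a triple -/
noncomputable def Admissible (A : Fin n → Fin n → ℝ) (b : Fin n → ℝ)
    (el : Fin n → Fin n) (e' e'' : Fin n → ℕ) : Prop :=
  ∀ j, lowVec A b el j ≤ hiVec A b e' e'' j

/-- membership in T -/
noncomputable def memT (A : Fin n → Fin n → ℝ) (b : Fin n → ℝ)
    (el : Fin n → Fin n) (e' e'' : Fin n → ℕ) : Prop :=
  memEund A b el ∧ memE' A b e' ∧ memE'' A b e'' ∧ Admissible A b el e' e''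

noncomputable def xe (A : Fin n → Fin n → ℝ) (b : Fin n → ℝ) (c : Fin n → ℝ)
    (el : Fin n → Fin n) (e' e'' : Fin n → ℕ) : Fin n → ℝ :=
  fun j => if 0 ≤ c j then lowVec A b el j else hiVec A b e' e'' j


private lemma maxmin_eq_iff' (hn : 0 < n) (A : Fin n → Fin n → ℝ) (x : Fin n → ℝ) (i : Fin n)
    (c : ℝ) : maxmin hn A x i = c ↔
      (∀ j, min (A i j) (min (x i) (x j)) ≤ c) ∧ ∃ j, c ≤ min (A i j) (min (x i) (x j)) := by
  unfold maxmin
  rw [le_antisymm_iff, Finset.sup'_le_iff, Finset.le_sup'_iff]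
  simp

private lemma vsup_le' {s : Finset (Fin n)} {f : Fin n → Fin n → ℝ} {j : Fin n} {c : ℝ}
    (h0 : 0 ≤ c) (h : ∀ i ∈ s, f i j ≤ c) : vsup s f j ≤ c := by
  unfold vsup; split
  · exact Finset.sup'_le _ _ h
  · exact h0

private lemma le_vsup' {s : Finset (Fin n)} {f : Fin n → Fin n → ℝ} {i j : Fin n}
    (hi : i ∈ s) : f i j ≤ vsup s f j := by
  unfold vsup
  rw [dif_pos ⟨i, hi⟩]
  exact Finset.le_sup' (fun i => f i j) hi

private lemma zero_le_vsup' {s : Finset (Fin n)} {f : Fin n → Fin n → ℝ} {j : Fin n}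
    (h : ∀ i ∈ s, 0 ≤ f i j) : 0 ≤ vsup s f j := by
  unfold vsup; split
  · next hne =>
      exact le_trans (h _ hne.choose_spec) (Finset.le_sup' (fun i => f i j) hne.choose_spec)
  · exact le_refl 0

private lemma le_vinf' {s : Finset (Fin n)} {f : Fin n → Fin n → ℝ} {j : Fin n} {c : ℝ}
    (h1 : c ≤ 1) (h : ∀ i ∈ s, c ≤ f i j) : c ≤ vinf s f j := by
  unfold vinf; split
  · exact Finset.le_inf' _ _ h
  · exact h1

private lemma vinf_le' {s : Finset (Fin n)} {f : Fin n → Fin n → ℝ} {i j : Fin n}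
    (hi : i ∈ s) : vinf s f j ≤ f i j := by
  unfold vinf
  rw [dif_pos ⟨i, hi⟩]
  exact Finset.inf'_le (fun i => f i j) hi

private lemma vinf_le_one' {s : Finset (Fin n)} {f : Fin n → Fin n → ℝ} {j : Fin n}
    (h : ∀ i ∈ s, f i j ≤ 1) : vinf s f j ≤ 1 := by
  unfold vinf; split
  · next hne =>
      exact le_trans (Finset.inf'_le (fun i => f i j) hne.choose_spec) (h _ hne.choose_spec)
  · exact le_refl 1

private lemma Xsel_one (A : Fin n → Fin n → ℝ) (b : Fin n → ℝ) (i : Fin n) :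
    Xsel A b 1 i = Xbar1 b i := if_pos rfl

private lemma Xsel_two (A : Fin n → Fin n → ℝ) (b : Fin n → ℝ) (i : Fin n) :
    Xsel A b 2 i = Xbar2 A b i := if_neg (by norm_num)

theorem stmt13 (n : ℕ) (hn : 0 < n) (A : Fin n → Fin n → ℝ) (b : Fin n → ℝ)
    (hA : ∀ i j, A i j ∈ Set.Icc (0:ℝ) 1) (hb : ∀ i, b i ∈ Set.Icc (0:ℝ) 1) :
    (SallSet hn A b).Nonempty ↔
      ∃ el e' e'', memEund A b el ∧ memE' A b e' ∧ memE'' A b e'' ∧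
        ∀ j, lowVec A b el j ≤ hiVec A b e' e'' j := by
  classical
  constructor
  · rintro ⟨x, hx, hxe⟩
    have heq : ∀ i, (∀ j, min (A i j) (min (x i) (x j)) ≤ b i) ∧
        ∃ j, b i ≤ min (A i j) (min (x i) (x j)) :=
      fun i => (maxmin_eq_iff' hn A x i (b i)).mp (hxe i)
    have h1 : ∀ i j, min (A i j) (min (x i) (x j)) ≤ b i := fun i => (heq i).1
    have hbx : ∀ i, b i ≤ x i := by
      intro i
      obtain ⟨j, hj⟩ := (heq i).2
      exact le_trans hj (le_trans (min_le_right _ _) (min_le_left _ _))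
    have hex : ∀ i, ∃ j, b i ≤ A i j ∧ b i ≤ x j := by
      intro i
      obtain ⟨j, hj⟩ := (heq i).2
      exact ⟨j, le_trans hj (min_le_left _ _),
        le_trans hj (le_trans (min_le_right _ _) (min_le_right _ _))⟩
    choose el hel1 hel2 using hex
    set e' : Fin n → ℕ := fun i => if x i ≤ b i then 1 else 2 with he'
    refine ⟨el, e', e', fun i _ => hel1 i, ?_, ?_, ?_⟩
    · intro i _; by_cases h : x i ≤ b i <;> simp [he', h]
    · intro i _; by_cases h : x i ≤ b i <;> simp [he', h]
    intro j
    have hlow : lowVec A b el j ≤ x j := by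
      unfold lowVec X1lo X2lo X3lo
      have h0 := (hx j).1
      refine max_le (vsup_le' h0 ?_) (max_le (vsup_le' h0 ?_) (vsup_le' h0 ?_)) <;>
        intro i hi
      · unfold Xund0; split
        · next h => subst h; exact hbx _
        · exact h0
      · unfold Xund0; split
        · next h => subst h; exact hbx _
        · exact h0
      · unfold XundJ; split
        · next h =>
            rcases h with h | h
            · subst h; exact hbx _
            · subst h; exact hel2 i
        · exact h0
    have hI23 : ∀ i : Fin n, x j ≤ Xsel A b (e' i) i j := by
      intro i
      by_cases hxi : x i ≤ b i
      · have h2 : e' i = 1 := if_pos hxi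
        rw [h2, Xsel_one]
        unfold Xbar1; split
        · next h => subst h; exact hxi
        · exact (hx j).2
      · have h2 : e' i = 2 := if_neg hxi
        rw [h2, Xsel_two]
        unfold Xbar2; split
        · next hAij =>
            have hm := h1 i j
            rcases min_le_iff.mp hm with h | h
            · linarith
            rcases min_le_iff.mp h with h | h
            · linarith
            · exact h
        · exact (hx j).2
    have hhi : x j ≤ hiVec A b e' e' j := by
      unfold hiVec X1hi X2hi X3hi
      have hone := (hx j).2
      refine le_min (le_vinf' hone ?_) (le_min (le_vinf' hone ?_) (le_vinf' hone ?_))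
      · intro i hi
        simp only [I1set, Finset.mem_filter, Finset.mem_univ, true_and] at hi
        unfold Xbar1; split
        · next h =>
            subst h
            have hm := h1 j j
            rw [min_self] at hm
            rcases min_le_iff.mp hm with h | h
            · linarith
            · exact h
        · exact hone
      · intro i _; exact hI23 i
      · intro i _; exact hI23 i
    exact le_trans hlow hhi
  · rintro ⟨el, e', e'', hEl, hE', hE'', hAdm⟩
    have hb0 : ∀ i, (0:ℝ) ≤ b i := fun i => (hb i).1
    have hb1 : ∀ i, b i ≤ 1 := fun i => (hb i).2
    have mI1 : ∀ i, b i < A i i → i ∈ I1set A b := by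
      intro i h; simp [I1set, h]
    have mI2 : ∀ i, A i i = b i → i ∈ I2set A b := by
      intro i h; simp [I2set, h]
    have mI3 : ∀ i, A i i < b i → i ∈ I3set A b := by
      intro i h; simp [I3set, h]
    have l1 : ∀ j, X1lo A b j ≤ lowVec A b el j := fun j => le_max_left _ _
    have l2 : ∀ j, X2lo A b j ≤ lowVec A b el j :=
      fun j => le_trans (le_max_left _ _) (le_max_right _ _)
    have l3 : ∀ j, X3lo A b el j ≤ lowVec A b el j :=
      fun j => le_trans (le_max_right _ _) (le_max_right _ _)
    have u1 : ∀ j, hiVec A b e' e'' j ≤ X1hi A b j := fun j => min_le_left _ _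
    have u2 : ∀ j, hiVec A b e' e'' j ≤ X2hi A b e' j :=
      fun j => le_trans (min_le_right _ _) (min_le_left _ _)
    have u3 : ∀ j, hiVec A b e' e'' j ≤ X3hi A b e'' j :=
      fun j => le_trans (min_le_right _ _) (min_le_right _ _)
    -- diagonal facts
    have hx1eq : ∀ i, b i < A i i → lowVec A b el i = b i := by
      intro i h
      refine le_antisymm ?_ ?_
      · have h2 : X1hi A b i ≤ Xbar1 b i i := vinf_le' (f := Xbar1 b) (mI1 i h)
        have h3 : Xbar1 b i i = b i := if_pos rfl
        exact le_trans (hAdm i) (le_trans (u1 i) (h3 ▸ h2))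
      · have h2 : Xund0 b i i ≤ X1lo A b i := le_vsup' (f := Xund0 b) (mI1 i h)
        have h3 : Xund0 b i i = b i := if_pos rfl
        exact le_trans (h3 ▸ h2) (l1 i)
    have hgeb : ∀ i, b i ≤ lowVec A b el i := by
      intro i
      rcases lt_trichotomy (A i i) (b i) with h | h | h
      · have h2 : XundJ b i (el i) i ≤ X3lo A b el i := le_vsup' (f := fun i => XundJ b i (el i)) (mI3 i h)
        have h3 : XundJ b i (el i) i = b i := if_pos (Or.inl rfl)
        exact le_trans (h3 ▸ h2) (l3 i)
      · have h2 : Xund0 b i i ≤ X2lo A b i := le_vsup' (f := Xund0 b) (mI2 i h)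
        have h3 : Xund0 b i i = b i := if_pos rfl
        exact le_trans (h3 ▸ h2) (l2 i)
      · exact (hx1eq i h).ge
    have helge : ∀ i, A i i < b i → b i ≤ lowVec A b el (el i) := by
      intro i h
      have h2 : XundJ b i (el i) (el i) ≤ X3lo A b el (el i) := le_vsup' (f := fun i => XundJ b i (el i)) (mI3 i h)
      have h3 : XundJ b i (el i) (el i) = b i := if_pos (Or.inr rfl)
      exact le_trans (h3 ▸ h2) (l3 (el i))
    have hE1' : ∀ i, A i i = b i → e' i = 1 → lowVec A b el i ≤ b i := by
      intro i h h2
      have h3 : X2hi A b e' i ≤ Xsel A b (e' i) i i := vinf_le' (f := fun i => Xsel A b (e' i) i) (mI2 i h)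
      rw [h2, Xsel_one] at h3
      have h4 : Xbar1 b i i = b i := if_pos rfl
      exact le_trans (hAdm i) (le_trans (u2 i) (h4 ▸ h3))
    have hE2' : ∀ i, A i i = b i → e' i = 2 → ∀ k, b i < A i k → lowVec A b el k ≤ b i := by
      intro i h h2 k hk
      have h3 : X2hi A b e' k ≤ Xsel A b (e' i) i k := vinf_le' (f := fun i => Xsel A b (e' i) i) (mI2 i h)
      rw [h2, Xsel_two] at h3
      have h4 : Xbar2 A b i k = b i := if_pos hk
      exact le_trans (hAdm k) (le_trans (u2 k) (h4 ▸ h3))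
    have hE1'' : ∀ i, A i i < b i → e'' i = 1 → lowVec A b el i ≤ b i := by
      intro i h h2
      have h3 : X3hi A b e'' i ≤ Xsel A b (e'' i) i i := vinf_le' (f := fun i => Xsel A b (e'' i) i) (mI3 i h)
      rw [h2, Xsel_one] at h3
      have h4 : Xbar1 b i i = b i := if_pos rfl
      exact le_trans (hAdm i) (le_trans (u3 i) (h4 ▸ h3))
    have hE2'' : ∀ i, A i i < b i → e'' i = 2 → ∀ k, b i < A i k → lowVec A b el k ≤ b i := by
      intro i h h2 k hk
      have h3 : X3hi A b e'' k ≤ Xsel A b (e'' i) i k := vinf_le' (f := fun i => Xsel A b (e'' i) i) (mI3 i h)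
      rw [h2, Xsel_two] at h3
      have h4 : Xbar2 A b i k = b i := if_pos hk
      exact le_trans (hAdm k) (le_trans (u3 k) (h4 ▸ h3))
    refine ⟨lowVec A b el, ?_, ?_⟩
    · intro j
      constructor
      · have h2 : (0:ℝ) ≤ X1lo A b j := by
          apply zero_le_vsup'
          intro i _
          unfold Xund0; split
          · exact hb0 i
          · exact le_refl 0
        exact le_trans h2 (l1 j)
      · have h2 : X1hi A b j ≤ 1 := by
          apply vinf_le_one'
          intro i _
          unfold Xbar1; split
          · exact hb1 i
          · exact le_refl 1
        exact le_trans (hAdm j) (le_trans (u1 j) h2)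
    · intro i
      rw [maxmin_eq_iff']
      rcases lt_trichotomy (A i i) (b i) with h | h | h
      · refine ⟨?_, ⟨el i, ?_⟩⟩
        · intro j
          rcases hE'' i h with h2 | h2
          · exact le_trans (le_trans (min_le_right _ _) (min_le_left _ _)) (hE1'' i h h2)
          · by_cases hAij : b i < A i j
            · exact le_trans (le_trans (min_le_right _ _) (min_le_right _ _))
                (hE2'' i h h2 j hAij)
            · exact le_trans (min_le_left _ _) (not_lt.mp hAij)
        · exact le_min (hEl i h) (le_min (hgeb i) (helge i h))
      · refine ⟨?_, ⟨i, ?_⟩⟩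
        · intro j
          rcases hE' i h with h2 | h2
          · exact le_trans (le_trans (min_le_right _ _) (min_le_left _ _)) (hE1' i h h2)
          · by_cases hAij : b i < A i j
            · exact le_trans (le_trans (min_le_right _ _) (min_le_right _ _))
                (hE2' i h h2 j hAij)
            · exact le_trans (min_le_left _ _) (not_lt.mp hAij)
        · exact le_min h.ge (le_min (hgeb i) (hgeb i))
      · have hxi := hx1eq i h
        refine ⟨?_, ⟨i, ?_⟩⟩
        · intro j
          exact le_trans (le_trans (min_le_right _ _) (min_le_left _ _)) hxi.le
        · rw [hxi]; exact le_min h.le (le_min le_rfl le_rfl)
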